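/- Let f : ℝ → ℝ satisfy: (i) f belongs to the Newton class; (ii) the limits of f at +∞ and −∞ are infinite and of opposite signs (either f(x) → +∞ as x → +∞ and f(x) → −∞ as x → −∞, or vice versa); (iii) f has at least four real roots. Then the set of all real numbers a for which the iteration sequence (M_fⁿ(a))_{n∈ℕ} does not converge (to any real limit) is uncountable. -/

import Mathlib

/-- `f` belongs to the Newton class: `f` is twice continuously differentiable,
roots of `f` are simple, and roots of `f'` are simple. -/
def NewtonClass (f : ℝ → ℝ) : Prop :=
  ContDiff ℝ 2 f ∧ (∀ x, f x = 0 → deriv f x ≠ 0) ∧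
    (∀ x, deriv f x = 0 → deriv (deriv f) x ≠ 0)

/-- The classical Newton approximation function `N_f(x) = x - f(x)/f'(x)`. -/
noncomputable def newtonFun (f : ℝ → ℝ) (x : ℝ) : ℝ :=
  x - f x / deriv f x

/-- The modified Newton approximation function
`M_f(x) = N_f(x) - f(N_f(x))/f'(x)`. -/
noncomputable def modNewtonFun (f : ℝ → ℝ) (x : ℝ) : ℝ :=
  newtonFun f x - f (newtonFun f x) / deriv f x


/-!
Between the roots `r₂ < r₃` there is a critical point, and around each of `r₂`, `r₃` we take a
maximal open interval on which `f' ≠ 0`. At its endpoints `f'` vanishes while `f` does not, and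
there `M_f` escapes to infinity with the sign of `f`; since `f` is monotone on the interval,
these signs differ at the two ends, so `M_f` maps each interval continuously onto `ℝ`. Two
disjoint compact pieces of these intervals then form a horseshoe: every itinerary in `Bool^ℕ`
is realised by an orbit, and the uncountably many itineraries visiting both pieces infinitely
often give orbits that cannot converge.
-/

open Filter Set Topology

section Itinerary

variable {X ι : Type*} {g : X → X} {K : ι → Set X} {S : Set X}

def itinerarySet (g : X → X) (K : ι → Set X) (s : ℕ → ι) (n : ℕ) : Set X :=
  {x | ∀ k ≤ n, g^[k] x ∈ K (s k)}

lemma itinerarySet_zero (s : ℕ → ι) : itinerarySet g K s 0 = K (s 0) := by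
  simp [itinerarySet]

lemma itinerarySet_succ (s : ℕ → ι) (n : ℕ) :
    itinerarySet g K s (n + 1) = K (s 0) ∩ g ⁻¹' itinerarySet g K (fun k => s (k + 1)) n := by
  ext x
  simp only [itinerarySet, mem_ofPred_eq, mem_inter_iff, mem_preimage,
    ← Function.iterate_succ_apply]
  refine ⟨fun h => ⟨h 0 (Nat.zero_le _), fun k hk => h (k + 1) (by omega)⟩, ?_⟩
  rintro ⟨h₀, h⟩ (_ | k) hk
  exacts [h₀, h k (by omega)]

lemma itinerarySet_succ_subset (s : ℕ → ι) (n : ℕ) :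
    itinerarySet g K s (n + 1) ⊆ itinerarySet g K s n :=
  fun _ hx k hk => hx k (hk.trans n.le_succ)

lemma subset_image_iterate_itinerarySet (hKS : ∀ i, K i ⊆ S) (hSK : ∀ i, S ⊆ g '' K i)
    (s : ℕ → ι) (n : ℕ) : S ⊆ g^[n + 1] '' itinerarySet g K s n := by
  induction n generalizing s with
  | zero => simpa [itinerarySet_zero] using hSK (s 0)
  | succ n ih =>
    intro y hy
    obtain ⟨z, hz, rfl⟩ := ih (fun k => s (k + 1)) hy
    obtain ⟨x, hx, rfl⟩ := hSK (s 0) (hKS _ (hz 0 n.zero_le))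
    exact ⟨x, by rw [itinerarySet_succ]; exact ⟨hx, hz⟩, Function.iterate_succ_apply ..⟩

variable [TopologicalSpace X]

lemma isCompact_itinerarySet [T2Space X] (hK : ∀ i, IsCompact (K i))
    (hg : ∀ i, ContinuousOn g (K i)) (s : ℕ → ι) (n : ℕ) :
    IsCompact (itinerarySet g K s n) := by
  induction n generalizing s with
  | zero => simpa [itinerarySet_zero] using hK (s 0)
  | succ n ih =>
    rw [itinerarySet_succ]
    exact (hK (s 0)).of_isClosed_subset ((hg (s 0)).preimage_isClosed_of_isClosed
      (hK (s 0)).isClosed (ih _).isClosed) inter_subset_left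

theorem exists_forall_iterate_mem [T2Space X] (hK : ∀ i, IsCompact (K i))
    (hg : ∀ i, ContinuousOn g (K i)) (hKS : ∀ i, K i ⊆ S) (hSK : ∀ i, S ⊆ g '' K i)
    (hS : S.Nonempty) (s : ℕ → ι) : ∃ x, ∀ n, g^[n] x ∈ K (s n) := by
  obtain ⟨x, hx⟩ := IsCompact.nonempty_iInter_of_sequence_nonempty_isCompact_isClosed _
    (itinerarySet_succ_subset s)
    (fun n => (hS.mono (subset_image_iterate_itinerarySet hKS hSK s n)).of_image)
    (isCompact_itinerarySet hK hg s 0) (fun n => (isCompact_itinerarySet hK hg s n).isClosed)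
  exact ⟨x, fun n => mem_iInter.1 hx n n le_rfl⟩

end Itinerary

section Horseshoe

variable {X : Type*} [TopologicalSpace X]

def nonconvergentPoints (g : X → X) : Set X :=
  {a | ¬ ∃ L, Tendsto (fun n => g^[n] a) atTop (𝓝 L)}

lemma not_tendsto_of_frequently_mem_of_disjoint {α : Type*} {l : Filter α} {u : α → X}
    {A B : Set X} (hA : IsClosed A) (hB : IsClosed B) (hAB : Disjoint A B)
    (huA : ∃ᶠ n in l, u n ∈ A) (huB : ∃ᶠ n in l, u n ∈ B) (L : X) : ¬ Tendsto u l (𝓝 L) :=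
  fun hL => hAB.notMem_of_mem_left (hA.mem_of_frequently_of_tendsto huA hL)
    (hB.mem_of_frequently_of_tendsto huB hL)

def interleaveAlternating (t : ℕ → Bool) (n : ℕ) : Bool :=
  if n % 2 = 0 then t (n / 2) else decide (n % 4 = 1)

lemma interleaveAlternating_injective : Function.Injective interleaveAlternating :=
  fun t t' h => funext fun k => by
    simpa [interleaveAlternating] using congrFun h (2 * k)

lemma frequently_interleaveAlternating_eq (t : ℕ → Bool) (b : Bool) :
    ∃ᶠ n in atTop, interleaveAlternating t n = b := by
  refine frequently_atTop.2 fun N => ?_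
  cases b
  · refine ⟨4 * N + 3, by omega, ?_⟩
    rw [interleaveAlternating, if_neg (by omega), decide_eq_false_iff_not]
    omega
  · refine ⟨4 * N + 1, by omega, ?_⟩
    rw [interleaveAlternating, if_neg (by omega), decide_eq_true_iff]
    omega

instance : Uncountable (ℕ → Bool) := by
  rw [← Cardinal.aleph0_lt_mk_iff]
  simpa using Cardinal.cantor Cardinal.aleph0

theorem not_countable_nonconvergentPoints [T2Space X] {g : X → X} {K : Bool → Set X}
    {S : Set X} (hK : ∀ b, IsCompact (K b)) (hdisj : Disjoint (K false) (K true))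
    (hg : ∀ b, ContinuousOn g (K b)) (hKS : ∀ b, K b ⊆ S) (hSK : ∀ b, S ⊆ g '' K b)
    (hS : S.Nonempty) : ¬ (nonconvergentPoints g).Countable := by
  choose F hF using exists_forall_iterate_mem hK hg hKS hSK hS
  have hsymbol : ∀ {x b b'}, x ∈ K b → x ∈ K b' → b = b' := by
    intro x b b' hb hb'
    cases b <;> cases b'
    exacts [rfl, (hdisj.notMem_of_mem_left hb hb').elim,
      (hdisj.notMem_of_mem_left hb' hb).elim, rfl]
  have hF_inj : Function.Injective F := fun s s' h =>
    funext fun n => hsymbol (hF s n) (h ▸ hF s' n)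
  have hdiv : ∀ t, F (interleaveAlternating t) ∈ nonconvergentPoints g := by
    rintro t ⟨L, hL⟩
    refine not_tendsto_of_frequently_mem_of_disjoint (hK false).isClosed (hK true).isClosed
      hdisj ?_ ?_ L hL
    · exact (frequently_interleaveAlternating_eq t false).mono fun n hn => hn ▸ hF _ n
    · exact (frequently_interleaveAlternating_eq t true).mono fun n hn => hn ▸ hF _ n
  exact fun hcount => not_countable_univ <| MapsTo.countable_of_injOn (fun t _ => hdiv t)
    (hF_inj.comp interleaveAlternating_injective).injOn hcount

end Horseshoe

lemma exists_uIcc_subset_image_of_surjOn {g : ℝ → ℝ} {I : Set ℝ} [I.OrdConnected]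
    (hg : ContinuousOn g I) (hsurj : SurjOn g I univ) (p q : ℝ) :
    ∃ x y, uIcc x y ⊆ I ∧ uIcc p q ⊆ g '' uIcc x y := by
  obtain ⟨x, hx, rfl⟩ := hsurj (mem_univ p)
  obtain ⟨y, hy, rfl⟩ := hsurj (mem_univ q)
  have hxy : uIcc x y ⊆ I := OrdConnected.uIcc_subset ‹_› hx hy
  exact ⟨x, y, hxy, intermediate_value_uIcc (hg.mono hxy)⟩

theorem not_countable_nonconvergentPoints_of_surjOn_Ioo {g : ℝ → ℝ} {a b c d : ℝ}
    (hbc : b ≤ c) (hg₀ : ContinuousOn g (Ioo a b)) (hg₁ : ContinuousOn g (Ioo c d))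
    (hs₀ : SurjOn g (Ioo a b) univ) (hs₁ : SurjOn g (Ioo c d) univ) :
    ¬ (nonconvergentPoints g).Countable := by
  obtain ⟨x₀, y₀, hK₀, hS₀⟩ := exists_uIcc_subset_image_of_surjOn hg₀ hs₀ a d
  obtain ⟨x₁, y₁, hK₁, hS₁⟩ := exists_uIcc_subset_image_of_surjOn hg₁ hs₁ a d
  have hab : a < b := nonempty_Ioo.1 ⟨x₀, hK₀ left_mem_uIcc⟩
  have hcd : c < d := nonempty_Ioo.1 ⟨x₁, hK₁ left_mem_uIcc⟩
  have hsub₀ : Ioo a b ⊆ uIcc a d :=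
    Ioo_subset_Icc_self.trans ((Icc_subset_Icc_right (hbc.trans hcd.le)).trans Icc_subset_uIcc)
  have hsub₁ : Ioo c d ⊆ uIcc a d :=
    Ioo_subset_Icc_self.trans ((Icc_subset_Icc_left (hab.le.trans hbc)).trans Icc_subset_uIcc)
  refine not_countable_nonconvergentPoints (K := fun i => cond i (uIcc x₁ y₁) (uIcc x₀ y₀))
    (Bool.forall_bool.2 ⟨isCompact_uIcc, isCompact_uIcc⟩) ?_
    (Bool.forall_bool.2 ⟨hg₀.mono hK₀, hg₁.mono hK₁⟩)
    (Bool.forall_bool.2 ⟨hK₀.trans hsub₀, hK₁.trans hsub₁⟩) (Bool.forall_bool.2 ⟨hS₀, hS₁⟩)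
    nonempty_uIcc
  exact disjoint_left.2 fun x h₀ h₁ => ((hK₀ h₀).2.trans_le hbc).not_gt (hK₁ h₁).1

lemma modNewtonFun_neg (f : ℝ → ℝ) : modNewtonFun (fun x => -f x) = modNewtonFun f := by
  have hN : newtonFun (fun x => -f x) = newtonFun f := by
    funext x
    simp only [newtonFun, deriv.fun_neg', neg_div_neg_eq]
  funext x
  simp only [modNewtonFun, hN, deriv.fun_neg', neg_div_neg_eq]

lemma modNewtonFun_eq_add_neg (f : ℝ → ℝ) (x : ℝ) :
    modNewtonFun f x = x + -((f x + f (newtonFun f x)) * (deriv f x)⁻¹) := by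
  simp only [modNewtonFun, newtonFun, div_eq_mul_inv]
  ring

lemma newtonFun_eq_add_neg (f : ℝ → ℝ) (x : ℝ) : newtonFun f x = x + -(f x * (deriv f x)⁻¹) := by
  simp only [newtonFun, div_eq_mul_inv]
  ring

lemma continuousOn_modNewtonFun {f : ℝ → ℝ} (hf : Continuous f) (hf' : Continuous (deriv f)) :
    ContinuousOn (modNewtonFun f) {x | deriv f x ≠ 0} := by
  have hN : ContinuousOn (newtonFun f) {x | deriv f x ≠ 0} :=
    continuousOn_id.sub (hf.continuousOn.div hf'.continuousOn fun _ hx => hx)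
  exact hN.sub ((hf.comp_continuousOn hN).div hf'.continuousOn fun _ hx => hx)

section Asymptotics

variable {f : ℝ → ℝ} {l : Filter ℝ} {e c : ℝ}

/- `N_f` escapes to infinity, where `f ∘ N_f` follows it; whatever the sign of `f'`, the quotient
`(f + f ∘ N_f) / f'` then tends to `+∞` (to `-∞` in the next lemma). -/
theorem tendsto_modNewtonFun_atBot (htop : Tendsto f atTop atTop) (hbot : Tendsto f atBot atBot)
    (hl : l ≤ 𝓝 e) (hfc : Tendsto f l (𝓝 c)) (hc : c < 0)
    (hd : Tendsto (deriv f) l (𝓝[>] 0) ∨ Tendsto (deriv f) l (𝓝[<] 0)) :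
    Tendsto (modNewtonFun f) l atBot := by
  have hx : Tendsto id l (𝓝 e) := hl
  suffices Tendsto (fun x => (f x + f (newtonFun f x)) * (deriv f x)⁻¹) l atTop by
    exact (hx.add_atBot (tendsto_neg_atTop_atBot.comp this)).congr
      fun x => (modNewtonFun_eq_add_neg f x).symm
  rcases hd with hd | hd
  · have hN : Tendsto (newtonFun f) l atTop := by
      exact (hx.add_atTop
        (tendsto_neg_atBot_atTop.comp (hfc.neg_mul_atTop hc hd.inv_tendsto_nhdsGT_zero))).congr
        fun x => (newtonFun_eq_add_neg f x).symm
    exact (hfc.add_atTop (htop.comp hN)).atTop_mul_atTop₀ hd.inv_tendsto_nhdsGT_zero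
  · have hN : Tendsto (newtonFun f) l atBot := by
      exact (hx.add_atBot
        (tendsto_neg_atTop_atBot.comp (hfc.neg_mul_atBot hc hd.inv_tendsto_nhdsLT_zero))).congr
        fun x => (newtonFun_eq_add_neg f x).symm
    exact (hfc.add_atBot (hbot.comp hN)).atBot_mul_atBot₀ hd.inv_tendsto_nhdsLT_zero

theorem tendsto_modNewtonFun_atTop (htop : Tendsto f atTop atTop) (hbot : Tendsto f atBot atBot)
    (hl : l ≤ 𝓝 e) (hfc : Tendsto f l (𝓝 c)) (hc : 0 < c)
    (hd : Tendsto (deriv f) l (𝓝[>] 0) ∨ Tendsto (deriv f) l (𝓝[<] 0)) :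
    Tendsto (modNewtonFun f) l atTop := by
  have hx : Tendsto id l (𝓝 e) := hl
  suffices Tendsto (fun x => (f x + f (newtonFun f x)) * (deriv f x)⁻¹) l atBot by
    exact (hx.add_atTop (tendsto_neg_atBot_atTop.comp this)).congr
      fun x => (modNewtonFun_eq_add_neg f x).symm
  rcases hd with hd | hd
  · have hN : Tendsto (newtonFun f) l atBot := by
      exact (hx.add_atBot
        (tendsto_neg_atTop_atBot.comp (hfc.pos_mul_atTop hc hd.inv_tendsto_nhdsGT_zero))).congr
        fun x => (newtonFun_eq_add_neg f x).symm
    exact (hfc.add_atBot (hbot.comp hN)).atBot_mul_atTop₀ hd.inv_tendsto_nhdsGT_zero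
  · have hN : Tendsto (newtonFun f) l atTop := by
      exact (hx.add_atTop
        (tendsto_neg_atBot_atTop.comp (hfc.pos_mul_atBot hc hd.inv_tendsto_nhdsLT_zero))).congr
        fun x => (newtonFun_eq_add_neg f x).symm
    exact (hfc.add_atTop (htop.comp hN)).atTop_mul_atBot₀ hd.inv_tendsto_nhdsLT_zero

end Asymptotics

lemma IsPreconnected.forall_pos_or_forall_neg {X : Type*} [TopologicalSpace X] {s : Set X}
    {h : X → ℝ} (hs : IsPreconnected s) (hh : ContinuousOn h s) (hne : ∀ x ∈ s, h x ≠ 0) :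
    (∀ x ∈ s, 0 < h x) ∨ (∀ x ∈ s, h x < 0) := by
  by_contra! H
  obtain ⟨⟨x, hx, hx0⟩, ⟨y, hy, hy0⟩⟩ := H
  obtain ⟨z, hz, hz0⟩ := hs.intermediate_value hx hy hh ⟨hx0, hy0⟩
  exact hne z hz hz0

lemma exists_Ioo_forall_ne_zero {h : ℝ → ℝ} (hh : Continuous h) {c c' r : ℝ} (hcr : c < r)
    (hrc' : r < c') (hc : h c = 0) (hc' : h c' = 0) (hr : h r ≠ 0) :
    ∃ α β, c ≤ α ∧ α < r ∧ r < β ∧ β ≤ c' ∧ h α = 0 ∧ h β = 0 ∧ ∀ x ∈ Ioo α β, h x ≠ 0 := by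
  have hZ : IsClosed (h ⁻¹' {0}) := isClosed_singleton.preimage hh
  obtain ⟨α, ⟨⟨hcα, hαr⟩, hα⟩, hα_max⟩ := (isCompact_Icc.inter_right hZ).exists_isGreatest
    (⟨c, ⟨le_rfl, hcr.le⟩, hc⟩ : (Icc c r ∩ h ⁻¹' {0}).Nonempty)
  obtain ⟨β, ⟨⟨hrβ, hβc'⟩, hβ⟩, hβ_min⟩ := (isCompact_Icc.inter_right hZ).exists_isLeast
    (⟨c', ⟨hrc'.le, le_rfl⟩, hc'⟩ : (Icc r c' ∩ h ⁻¹' {0}).Nonempty)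
  refine ⟨α, β, hcα, hαr.lt_of_ne (by rintro rfl; exact hr hα),
    hrβ.lt_of_ne (by rintro rfl; exact hr hβ), hβc', hα, hβ, fun x hx hx0 => ?_⟩
  rcases le_or_gt x r with hxr | hrx
  · exact (hα_max ⟨⟨hcα.trans hx.1.le, hxr⟩, hx0⟩).not_gt hx.1
  · exact (hβ_min ⟨⟨hrx.le, hx.2.le.trans hβc'⟩, hx0⟩).not_gt hx.2

theorem surjOn_modNewtonFun_Ioo {f : ℝ → ℝ} (htop : Tendsto f atTop atTop)
    (hbot : Tendsto f atBot atBot) (hf : Continuous f) (hf' : Continuous (deriv f))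
    {α β r : ℝ} (hr : r ∈ Ioo α β) (hfr : f r = 0) (hα : deriv f α = 0) (hβ : deriv f β = 0)
    (hne : ∀ x ∈ Ioo α β, deriv f x ≠ 0) : SurjOn (modNewtonFun f) (Ioo α β) univ := by
  have hαβ : α < β := hr.1.trans hr.2
  have hcont : ContinuousOn (modNewtonFun f) (Ioo α β) :=
    (continuousOn_modNewtonFun hf hf').mono hne
  have hα_le : 𝓝[>] α ≤ 𝓟 (Ioo α β) := le_principal_iff.2 (Ioo_mem_nhdsGT hαβ)
  have hβ_le : 𝓝[<] β ≤ 𝓟 (Ioo α β) := le_principal_iff.2 (Ioo_mem_nhdsLT hαβ)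
  have hfα : Tendsto f (𝓝[>] α) (𝓝 (f α)) := (hf.tendsto α).mono_left nhdsWithin_le_nhds
  have hfβ : Tendsto f (𝓝[<] β) (𝓝 (f β)) := (hf.tendsto β).mono_left nhdsWithin_le_nhds
  have hd : ∀ {t : Set ℝ} {p : ℝ} {l : Filter ℝ}, (∀ x ∈ Ioo α β, deriv f x ∈ t) →
      deriv f p = 0 → l ≤ 𝓝 p → l ≤ 𝓟 (Ioo α β) → Tendsto (deriv f) l (𝓝[t] 0) :=
    fun ht hp hlp hlI => tendsto_nhdsWithin_iff.2
      ⟨hp ▸ (hf'.tendsto _).mono_left hlp, mem_of_superset (le_principal_iff.1 hlI) ht⟩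
  rcases isPreconnected_Ioo.forall_pos_or_forall_neg hf'.continuousOn hne with hpos | hneg
  · have hmono : StrictMonoOn f (Icc α β) := strictMonoOn_of_deriv_pos (convex_Icc α β)
      hf.continuousOn (by simpa only [interior_Icc] using hpos)
    have hfα0 : f α < 0 := hfr ▸ hmono (left_mem_Icc.2 hαβ.le) (Ioo_subset_Icc_self hr) hr.1
    have hfβ0 : 0 < f β := hfr ▸ hmono (Ioo_subset_Icc_self hr) (right_mem_Icc.2 hαβ.le) hr.2
    exact isPreconnected_Ioo.intermediate_value_Iii hα_le hβ_le hcont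
      (tendsto_modNewtonFun_atBot htop hbot nhdsWithin_le_nhds hfα hfα0
        (.inl (hd hpos hα nhdsWithin_le_nhds hα_le)))
      (tendsto_modNewtonFun_atTop htop hbot nhdsWithin_le_nhds hfβ hfβ0
        (.inl (hd hpos hβ nhdsWithin_le_nhds hβ_le)))
  · have hanti : StrictAntiOn f (Icc α β) := strictAntiOn_of_deriv_neg (convex_Icc α β)
      hf.continuousOn (by simpa only [interior_Icc] using hneg)
    have hfα0 : 0 < f α := hfr ▸ hanti (left_mem_Icc.2 hαβ.le) (Ioo_subset_Icc_self hr) hr.1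
    have hfβ0 : f β < 0 := hfr ▸ hanti (Ioo_subset_Icc_self hr) (right_mem_Icc.2 hαβ.le) hr.2
    exact isPreconnected_Ioo.intermediate_value_Iii hβ_le hα_le hcont
      (tendsto_modNewtonFun_atBot htop hbot nhdsWithin_le_nhds hfβ hfβ0
        (.inr (hd hneg hβ nhdsWithin_le_nhds hβ_le)))
      (tendsto_modNewtonFun_atTop htop hbot nhdsWithin_le_nhds hfα hfα0
        (.inr (hd hneg hα nhdsWithin_le_nhds hα_le)))

theorem not_countable_nonconvergentPoints_modNewtonFun {f : ℝ → ℝ} (hf : ContDiff ℝ 1 f)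
    (hsimple : ∀ x, f x = 0 → deriv f x ≠ 0)
    (htop : Tendsto f atTop atTop) (hbot : Tendsto f atBot atBot) {r₁ r₂ r₃ r₄ : ℝ}
    (h₁₂ : r₁ < r₂) (h₂₃ : r₂ < r₃) (h₃₄ : r₃ < r₄)
    (hr₁ : f r₁ = 0) (hr₂ : f r₂ = 0) (hr₃ : f r₃ = 0) (hr₄ : f r₄ = 0) :
    ¬ (nonconvergentPoints (modNewtonFun f)).Countable := by
  have hfc : Continuous f := hf.continuous
  have hf' : Continuous (deriv f) := hf.continuous_deriv le_rfl
  obtain ⟨c₁, hc₁, hc₁0⟩ := exists_deriv_eq_zero h₁₂ hfc.continuousOn (hr₁.trans hr₂.symm)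
  obtain ⟨c₂, hc₂, hc₂0⟩ := exists_deriv_eq_zero h₂₃ hfc.continuousOn (hr₂.trans hr₃.symm)
  obtain ⟨c₃, hc₃, hc₃0⟩ := exists_deriv_eq_zero h₃₄ hfc.continuousOn (hr₃.trans hr₄.symm)
  obtain ⟨α, β, -, hαr₂, hr₂β, hβc₂, hα, hβ, hne₁⟩ :=
    exists_Ioo_forall_ne_zero hf' hc₁.2 hc₂.1 hc₁0 hc₂0 (hsimple r₂ hr₂)
  obtain ⟨γ, δ, hc₂γ, hγr₃, hr₃δ, -, hγ, hδ, hne₂⟩ :=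
    exists_Ioo_forall_ne_zero hf' hc₂.2 hc₃.1 hc₂0 hc₃0 (hsimple r₃ hr₃)
  exact not_countable_nonconvergentPoints_of_surjOn_Ioo (hβc₂.trans hc₂γ)
    ((continuousOn_modNewtonFun hfc hf').mono hne₁) ((continuousOn_modNewtonFun hfc hf').mono hne₂)
    (surjOn_modNewtonFun_Ioo htop hbot hfc hf' ⟨hαr₂, hr₂β⟩ hr₂ hα hβ hne₁)
    (surjOn_modNewtonFun_Ioo htop hbot hfc hf' ⟨hγr₃, hr₃δ⟩ hr₃ hγ hδ hne₂)

/-- If `f` is a Newton-class function, has infinite limits of opposite signs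
at `±∞`, and has at least four real roots, then the set of points whose
iteration sequence under `M_f` does not converge is uncountable. -/
theorem modNewtonFun_uncountable_divergence
    (f : ℝ → ℝ)
    (hf : NewtonClass f)
    (hlim : (Filter.Tendsto f Filter.atTop Filter.atTop ∧
              Filter.Tendsto f Filter.atBot Filter.atBot) ∨
            (Filter.Tendsto f Filter.atTop Filter.atBot ∧
              Filter.Tendsto f Filter.atBot Filter.atTop))
    (hroots : ∃ r₁ r₂ r₃ r₄ : ℝ, r₁ < r₂ ∧ r₂ < r₃ ∧ r₃ < r₄ ∧
      f r₁ = 0 ∧ f r₂ = 0 ∧ f r₃ = 0 ∧ f r₄ = 0) :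
    ¬ Set.Countable
      {a : ℝ | ¬ ∃ L : ℝ,
        Filter.Tendsto (fun n => (modNewtonFun f)^[n] a) Filter.atTop (nhds L)} := by
  obtain ⟨hC, hsimple, -⟩ := hf
  obtain ⟨r₁, r₂, r₃, r₄, h₁₂, h₂₃, h₃₄, hr₁, hr₂, hr₃, hr₄⟩ := hroots
  have hC₁ : ContDiff ℝ 1 f := hC.of_le (by norm_num)
  rcases hlim with ⟨htop, hbot⟩ | ⟨htop, hbot⟩
  · exact not_countable_nonconvergentPoints_modNewtonFun hC₁ hsimple htop hbot h₁₂ h₂₃ h₃₄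
      hr₁ hr₂ hr₃ hr₄
  · have hsimple_neg : ∀ x, -f x = 0 → deriv (fun y => -f y) x ≠ 0 := fun x hx => by
      rw [deriv.fun_neg, neg_ne_zero]
      exact hsimple x (neg_eq_zero.1 hx)
    rw [← modNewtonFun_neg]
    exact not_countable_nonconvergentPoints_modNewtonFun hC₁.neg hsimple_neg
      (tendsto_neg_atBot_atTop.comp htop) (tendsto_neg_atTop_atBot.comp hbot) h₁₂ h₂₃ h₃₄
      (by simp [hr₁]) (by simp [hr₂]) (by simp [hr₃]) (by simp [hr₄])
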